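/- Let G = (V,E) be a finite simple graph. Let p be a function assigning to every non-isolated vertex v an edge p(v) of G incident to v. Call a vertex u a receiver if there exists a vertex v ≠ u with p(v) = {v,u}. Let a be a function assigning to every receiver u one edge a(u) ∈ { p(v) : v ≠ u, p(v) = {v,u} }. Then the set F = { a(u) : u a receiver } is a (2,2)-edge-kernel of G, i.e., every vertex of G is incident to at most 2 edges of F and every edge of G is at line-graph distance at most 2 from some edge of F. -/

import Mathlib

open SimpleGraph

/-- The line graph of `G` on the type `Sym2 V`: two distinct edges of `G` are adjacent
iff they share an endpoint. Elements of `Sym2 V` that are not edges of `G` are isolated. -/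
def lineG {V : Type*} (G : SimpleGraph V) : SimpleGraph (Sym2 V) where
  Adj e f := e ≠ f ∧ e ∈ G.edgeSet ∧ f ∈ G.edgeSet ∧ ∃ v, v ∈ e ∧ v ∈ f
  symm := by
    constructor
    rintro e f ⟨hne, he, hf, v, hv1, hv2⟩
    exact ⟨hne.symm, hf, he, v, hv2, hv1⟩
  loopless := by
    constructor
    rintro e ⟨h, -⟩
    exact h rfl

/-- Line-graph distance between two edges, `∞` if not connected. -/
noncomputable def edistE {V : Type*} (G : SimpleGraph V) (e f : Sym2 V) : ℕ∞ :=
  (lineG G).edist e f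

/-- Line-graph distance from an edge to a set of edges; `∞` if the set is empty. -/
noncomputable def edistSet {V : Type*} (G : SimpleGraph V) (e : Sym2 V)
    (R : Set (Sym2 V)) : ℕ∞ :=
  ⨅ f ∈ R, edistE G e f

/-- `R` is an `(α,β)`-ruling set of `G`: any two distinct nodes of `R` are at distance
at least `α` and every node is at distance at most `β` from some node of `R`. -/
def IsRulingSet {V : Type*} (G : SimpleGraph V) (α β : ℕ) (R : Set V) : Prop :=
  (∀ u ∈ R, ∀ v ∈ R, u ≠ v → (α : ℕ∞) ≤ G.edist u v) ∧
  (∀ v : V, ∃ u ∈ R, G.edist v u ≤ (β : ℕ∞))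

/-- `F` is an `(α,β)`-ruling edge set of `G`: `F` consists of edges of `G`, any two
distinct edges of `F` are at line-graph distance at least `α`, and every edge of `G`
is at line-graph distance at most `β` from some edge of `F`. -/
def IsRulingEdgeSet {V : Type*} (G : SimpleGraph V) (α β : ℕ) (F : Set (Sym2 V)) : Prop :=
  F ⊆ G.edgeSet ∧
  (∀ e ∈ F, ∀ f ∈ F, e ≠ f → (α : ℕ∞) ≤ edistE G e f) ∧
  (∀ e ∈ G.edgeSet, ∃ f ∈ F, edistE G e f ≤ (β : ℕ∞))

/-- `F` is a `(d,r)`-edge-kernel of `G`: every vertex is incident to at most `d`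
edges of `F` and every edge of `G` is at line-graph distance at most `r` from `F`. -/
def IsEdgeKernel {V : Type*} (G : SimpleGraph V) (d r : ℕ) (F : Set (Sym2 V)) : Prop :=
  F ⊆ G.edgeSet ∧
  (∀ v : V, {e ∈ F | v ∈ e}.ncard ≤ d) ∧
  (∀ e ∈ G.edgeSet, ∃ f ∈ F, edistE G e f ≤ (r : ℕ∞))

/-
Every edge `xy` of `G` meets the proposal `p x = xu` at `x`, and `u` is then a receiver whose
accepted edge `a u` contains `u`; so `xy`, `p x`, `a u` is a walk of length two in the line graph.
An accepted edge `a u = p w = wu` that contains `x` is `a x` if `x = u` and `p x` if `x = w`,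
so at most two accepted edges meet at any vertex.
-/

section EdgeKernel

variable {V : Type*} {G : SimpleGraph V}

lemma edistE_le_one_of_mem {e f : Sym2 V} {v : V} (he : e ∈ G.edgeSet) (hf : f ∈ G.edgeSet)
    (hve : v ∈ e) (hvf : v ∈ f) : edistE G e f ≤ 1 := by
  rw [edistE, edist_le_one_iff_adj_or_eq]
  by_cases h : e = f
  · exact Or.inr h
  · exact Or.inl ⟨h, he, hf, v, hve, hvf⟩

lemma edistE_le_two_of_mem {e f g : Sym2 V} {v w : V} (he : e ∈ G.edgeSet)
    (hf : f ∈ G.edgeSet) (hg : g ∈ G.edgeSet) (hve : v ∈ e) (hvf : v ∈ f) (hwf : w ∈ f)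
    (hwg : w ∈ g) : edistE G e g ≤ 2 :=
  calc edistE G e g ≤ edistE G e f + edistE G f g := SimpleGraph.edist_triangle
    _ ≤ 1 + 1 :=
      add_le_add (edistE_le_one_of_mem he hf hve hvf) (edistE_le_one_of_mem hf hg hwf hwg)
    _ = 2 := one_add_one_eq_two

variable {p a : V → Sym2 V} {receiver : V → Prop}

lemma accepted_eq_or_eq_of_mem {u w x : V} (hpw : p w = s(w, u)) (hau : a u = p w)
    (hx : x ∈ a u) : a u = a x ∨ a u = p x := by
  rw [hau, hpw, Sym2.mem_iff] at hx
  rcases hx with rfl | rfl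
  · exact Or.inr hau
  · exact Or.inl rfl

lemma ncard_incident_accepted_le_two
    (ha : ∀ u, receiver u → ∃ w, p w = s(w, u) ∧ a u = p w) (x : V) :
    {e ∈ {e : Sym2 V | ∃ u, receiver u ∧ a u = e} | x ∈ e}.ncard ≤ 2 := by
  have hsub : {e ∈ {e : Sym2 V | ∃ u, receiver u ∧ a u = e} | x ∈ e} ⊆ {a x, p x} := by
    rintro _ ⟨⟨u, hu, rfl⟩, hx⟩
    obtain ⟨w, hpw, hau⟩ := ha u hu
    exact accepted_eq_or_eq_of_mem hpw hau hx
  calc _ ≤ ({a x, p x} : Set (Sym2 V)).ncard := Set.ncard_le_ncard hsub (Set.toFinite _)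
    _ ≤ 2 := (Set.ncard_insert_le _ _).trans (by simp)

lemma exists_accepted_edistE_le_two
    (hp : ∀ v, (∃ w, G.Adj v w) → p v ∈ G.edgeSet ∧ v ∈ p v)
    (hreceiver : ∀ v u, v ≠ u → (∃ w, G.Adj v w) → p v = s(v, u) → receiver u)
    (ha : ∀ u, receiver u → a u ∈ G.edgeSet ∧ u ∈ a u) {e : Sym2 V} (he : e ∈ G.edgeSet) :
    ∃ u, receiver u ∧ edistE G e (a u) ≤ 2 := by
  induction e using Sym2.ind with
  | _ x y =>
  have hx : ∃ w, G.Adj x w := ⟨y, he⟩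
  obtain ⟨hpx, hxpx⟩ := hp x hx
  obtain ⟨u, hpxu⟩ := Sym2.mem_iff_exists.mp hxpx
  have hxu : x ≠ u := (G.mem_edgeSet.mp (hpxu ▸ hpx)).ne
  have hu := hreceiver x u hxu hx hpxu
  exact ⟨u, hu, edistE_le_two_of_mem he hpx (ha u hu).1 (Sym2.mem_mk_left x y) hxpx
    (hpxu ▸ Sym2.mem_mk_right x u) (ha u hu).2⟩

end EdgeKernel

theorem stmt1_general {V : Type*} (G : SimpleGraph V)
    (p : V → Sym2 V)
    (hp : ∀ v : V, (∃ w, G.Adj v w) → p v ∈ G.edgeSet ∧ v ∈ p v)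
    (receiver : V → Prop)
    (hreceiver : ∀ u : V, receiver u ↔
      ∃ v : V, v ≠ u ∧ (∃ w, G.Adj v w) ∧ p v = s(v, u))
    (a : V → Sym2 V)
    (ha : ∀ u : V, receiver u →
      ∃ v : V, v ≠ u ∧ (∃ w, G.Adj v w) ∧ p v = s(v, u) ∧ a u = p v) :
    IsEdgeKernel G 2 2 {e : Sym2 V | ∃ u : V, receiver u ∧ a u = e} := by
  have haccept : ∀ u, receiver u → ∃ w, p w = s(w, u) ∧ a u = p w := fun u hu ↦ by
    obtain ⟨w, -, -, hpw, hau⟩ := ha u hu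
    exact ⟨w, hpw, hau⟩
  have hedge : ∀ u, receiver u → a u ∈ G.edgeSet := fun u hu ↦ by
    obtain ⟨w, -, hw, -, hau⟩ := ha u hu
    exact hau ▸ (hp w hw).1
  have hmem : ∀ u, receiver u → u ∈ a u := fun u hu ↦ by
    obtain ⟨w, hpw, hau⟩ := haccept u hu
    exact hau ▸ hpw ▸ Sym2.mem_mk_right w u
  refine ⟨?_, ncard_incident_accepted_le_two haccept, fun e he ↦ ?_⟩
  · rintro _ ⟨u, hu, rfl⟩
    exact hedge u hu
  · obtain ⟨u, hu, hdist⟩ := exists_accepted_edistE_le_two hp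
      (fun v u hvu hv hpv ↦ (hreceiver u).2 ⟨v, hvu, hv, hpv⟩)
      (fun u hu ↦ ⟨hedge u hu, hmem u hu⟩) he
    exact ⟨a u, ⟨u, hu, rfl⟩, hdist⟩

/-- the proposal technique. Every non-isolated vertex `v` proposes an
incident edge `p v`; a receiver `u` is a vertex that receives a proposal from some
other vertex, and it accepts one received proposal `a u`. The set of accepted edges
is a `(2,2)`-edge-kernel. -/
theorem stmt1 {V : Type*} [Fintype V] (G : SimpleGraph V)
    (p : V → Sym2 V)
    (hp : ∀ v : V, (∃ w, G.Adj v w) → p v ∈ G.edgeSet ∧ v ∈ p v)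
    (receiver : V → Prop)
    (hreceiver : ∀ u : V, receiver u ↔
      ∃ v : V, v ≠ u ∧ (∃ w, G.Adj v w) ∧ p v = s(v, u))
    (a : V → Sym2 V)
    (ha : ∀ u : V, receiver u →
      ∃ v : V, v ≠ u ∧ (∃ w, G.Adj v w) ∧ p v = s(v, u) ∧ a u = p v) :
    IsEdgeKernel G 2 2 {e : Sym2 V | ∃ u : V, receiver u ∧ a u = e} :=
  stmt1_general G p hp receiver hreceiver a ha
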